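/- Let g ≠ 0, κ, γ > 0, d ∈ (−1,1) and suppose C_b = g² d/(κγ) > 1. A quadruple (r, S_R, S_I, D_R) ∈ ℝ⁴ with r > 0 satisfies the equilibrium equations −κ r + g S_R = 0, −γ S_R + g r (D_R + d) + g S_I²/r = 0, −γ S_I − g S_I S_R / r = 0, −2γ D_R − 4 g r S_R = 0 if and only if r = r₀ := γ√(C_b − 1)/(√2 |g|), S_R = κ r₀ / g, S_I = 0 and D_R = d(1/C_b − 1). -/

import Mathlib

/-!
The first equation gives `S_R = κ r / g`, which turns the third into `(γ + κ) S_I = 0`.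
With `S_I = 0` the second equation fixes `D_R + d = κγ / g²`, and then the fourth gives
`2 g² r² = γ² (C_b − 1)`; as `r > 0` this determines `r`.
-/

def IsMaxwellBlochPolarEquilibrium (g κ γ d r SR SI DR : ℝ) : Prop :=
  -κ * r + g * SR = 0 ∧
    -γ * SR + g * r * (DR + d) + g * SI ^ 2 / r = 0 ∧
    -γ * SI - g * SI * SR / r = 0 ∧
    -2 * γ * DR - 4 * g * r * SR = 0

lemma eq_mul_sqrt_div_sqrt_two_mul_abs_iff {g γ c r : ℝ} (hg : g ≠ 0) (hγ : 0 < γ)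
    (hr : 0 < r) :
    r = γ * √c / (√2 * |g|) ↔ 2 * g ^ 2 * r ^ 2 = γ ^ 2 * c := by
  rw [eq_div_iff (by positivity), ← sq_eq_sq₀ (by positivity) (by positivity), mul_pow, mul_pow,
    mul_pow, Real.sq_sqrt zero_le_two, sq_abs]
  constructor
  · intro h
    have hc : 0 ≤ c := by
      by_contra! hc
      rw [Real.sqrt_eq_zero_of_nonpos hc.le] at h
      simp [hr.ne', hg] at h
    rw [Real.sq_sqrt hc] at h
    linarith
  · intro h
    have hc : 0 ≤ c := by nlinarith [pow_pos hr 2, pow_pos hγ 2, sq_nonneg g]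
    rw [Real.sq_sqrt hc]
    linarith

lemma isMaxwellBlochPolarEquilibrium_iff {g κ γ d r SR SI DR : ℝ} (hg : g ≠ 0) (hκ : 0 < κ)
    (hγ : 0 < γ) (hr : 0 < r) :
    IsMaxwellBlochPolarEquilibrium g κ γ d r SR SI DR ↔
      2 * g ^ 2 * r ^ 2 = γ ^ 2 * (g ^ 2 * d / (κ * γ) - 1) ∧ SR = κ * r / g ∧ SI = 0 ∧
        DR = κ * γ / g ^ 2 - d := by
  constructor
  · rintro ⟨h1, h2, h3, h4⟩
    obtain rfl : SR = κ * r / g := by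
      field_simp
      linarith
    obtain rfl : SI = 0 := by
      have h3' : (γ + κ) * SI = 0 := by
        field_simp at h3
        linarith
      exact (mul_eq_zero.1 h3').resolve_left (by positivity)
    obtain rfl : DR = κ * γ / g ^ 2 - d := by
      rw [zero_pow two_ne_zero, mul_zero, zero_div, add_zero] at h2
      field_simp at h2
      rw [mul_zero] at h2
      have := (mul_eq_zero.1 h2).resolve_left hr.ne'
      field_simp
      linarith
    refine ⟨?_, rfl, rfl, rfl⟩
    field_simp at h4 ⊢
    linarith
  · rintro ⟨hr2, rfl, rfl, rfl⟩
    refine ⟨by field_simp; ring, by field_simp; ring, by simp, ?_⟩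
    field_simp at hr2 ⊢
    linarith

theorem maxwell_bloch_polar_equilibrium
    (g κ γ d : ℝ) (hg : g ≠ 0) (hκ : 0 < κ) (hγ : 0 < γ)
    (hCb : 1 < g ^ 2 * d / (κ * γ))
    (r SR SI DR : ℝ) (hr : 0 < r) :
    (-κ * r + g * SR = 0 ∧
      -γ * SR + g * r * (DR + d) + g * SI ^ 2 / r = 0 ∧
      -γ * SI - g * SI * SR / r = 0 ∧
      -2 * γ * DR - 4 * g * r * SR = 0) ↔
    (r = γ * Real.sqrt (g ^ 2 * d / (κ * γ) - 1) / (Real.sqrt 2 * |g|) ∧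
      SR = κ * (γ * Real.sqrt (g ^ 2 * d / (κ * γ) - 1) / (Real.sqrt 2 * |g|)) / g ∧
      SI = 0 ∧
      DR = d * (1 / (g ^ 2 * d / (κ * γ)) - 1)) := by
  have hd : d ≠ 0 := by
    rintro rfl
    norm_num at hCb
  have hDR : d * (1 / (g ^ 2 * d / (κ * γ)) - 1) = κ * γ / g ^ 2 - d := by
    field_simp
  change IsMaxwellBlochPolarEquilibrium g κ γ d r SR SI DR ↔ _
  rw [isMaxwellBlochPolarEquilibrium_iff hg hκ hγ hr,
    ← eq_mul_sqrt_div_sqrt_two_mul_abs_iff hg hγ hr, hDR]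
  exact and_congr_right fun hr₀ => by rw [hr₀]
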